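/- arXiv:math/0311132 — 9 statements merged into one kernel-verified Lean document; each statement's English description precedes it below -/
import Mathlib

section
/- Let β be an associative Nijenhuis operator on an associative algebra (A,μ). Define x ≺ y := xβ(y), x ≻ y := β(x)y, x • y := -β(xy). Then (A, ≺, ≻, •) is an NS-algebra, i.e., with ⋆ := ≺ + ≻ + •, the four axioms (x≺y)≺z = x≺(y⋆z), (x≻y)≺z = x≻(y≺z), (x⋆y)≻z = x≻(y≻z), and (x⋆y)•z + (x•y)≺z = x≻(y•z) + x•(y⋆z) hold. -/
/-- The axioms of an NS-algebra for operations `p` (≺), `s` (≻), `b` (•),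
with ⋆ = p + s + b. -/
def IsNS {A : Type*} [AddCommGroup A] (p s b : A → A → A) : Prop :=
  ∀ x y z : A,
    p (p x y) z = p x (p y z + s y z + b y z) ∧
    p (s x y) z = s x (p y z) ∧
    s (p x y + s x y + b x y) z = s x (s y z) ∧
    b (p x y + s x y + b x y) z + p (b x y) z
      = s x (b y z) + b x (p y z + s y z + b y z)

/-- An associative Nijenhuis operator on an associative algebra gives
rise to an NS-algebra via x ≺ y = xβ(y), x ≻ y = β(x)y, x • y = -β(xy). -/
theorem nijenhuis_gives_NS
    {k A : Type*} [Field k] [CharZero k] [NonUnitalRing A] [Module k A]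
    (β : A →ₗ[k] A)
    (hβ : ∀ x y : A, β x * β y + β (β (x * y)) = β (β x * y + x * β y)) :
    IsNS (fun x y => x * β y) (fun x y => β x * y) (fun x y => -β (x * y)) := by
  intro x y z
  simp only [map_add, map_neg] at hβ
  refine ⟨?_, ?_, ?_, ?_⟩ <;> simp only [mul_add, add_mul, mul_neg, neg_mul, map_add, map_neg]
  · linear_combination (norm := noncomm_ring) x * hβ y z
  · noncomm_ring
  · linear_combination (norm := noncomm_ring) -(hβ x y * z)
  · linear_combination (norm := noncomm_ring) hβ x (y*z) - hβ (x*y) z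
end

section
/- Let β be an associative Nijenhuis operator on a unital associative algebra A with unit i. Define x ≺̃ y := xβ(i)β(y), x ≻̃ y := β(x)β(i)y, x •̃ y := -β(xβ(i)y). Then (A, ≺̃, ≻̃, •̃) is an NS-algebra. -/
/-- For an associative Nijenhuis operator β on a unital algebra,
the operations x ≺̃ y = xβ(1)β(y), x ≻̃ y = β(x)β(1)y, x •̃ y = -β(xβ(1)y)
form an NS-algebra. -/
theorem nijenhuis_unit_gives_NS
    {k A : Type*} [Field k] [CharZero k] [Ring A] [Algebra k A]
    (β : A →ₗ[k] A)
    (hβ : ∀ x y : A, β x * β y + β (β (x * y)) = β (β x * y + x * β y)) :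
    IsNS (fun x y => x * β 1 * β y) (fun x y => β x * β 1 * y)
      (fun x y => -β (x * β 1 * y)) := by
  -- β(a·β1) = β(a)·β1, from the Nijenhuis identity with y = 1.
  have h1 : ∀ a : A, β (a * β 1) = β a * β 1 := by
    intro a
    have h := hβ a 1
    rw [mul_one, mul_one, map_add] at h
    have h' : β (β a) + β (a * β 1) = β (β a) + β a * β 1 := by
      rw [← h, add_comm]
    exact add_left_cancel h'
  -- β(a ⋆ b) = β(a)·β1·β(b)
  have hstar : ∀ a b : A, β (a * β 1 * β b + β a * β 1 * b + -β (a * β 1 * b))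
      = β a * β 1 * β b := by
    intro a b
    have h := hβ (a * β 1) b
    rw [h1, map_add] at h
    rw [map_add, map_add, map_neg]
    linear_combination (norm := noncomm_ring) -h
  intro x y z
  refine ⟨?_, ?_, ?_, ?_⟩
  · dsimp only
    rw [hstar y z]
    noncomm_ring
  · dsimp only
    noncomm_ring
  · dsimp only
    rw [hstar x y]
    noncomm_ring
  · dsimp only
    -- Nijenhuis with (x·β1, y·β1·z) and (x·β1·y·β1, z)
    have hI := hβ (x * β 1) (y * β 1 * z)
    rw [h1, map_add] at hI
    have hII := hβ (x * β 1 * y * β 1) z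
    rw [h1, map_add] at hII
    simp only [add_mul, mul_add, neg_mul, mul_neg, map_add, map_neg]
    linear_combination (norm := noncomm_ring) hI - hII
end

section
/- Let γ be a TD-operator on a unital associative algebra A with unit i. Define x ≺ y := xγ(y), x ≻ y := γ(x)y, x ∘ y := -xγ(i)y. Then (A, ≺, ≻, ∘) is a dendriform trialgebra. -/
/-- The axioms of a dendriform trialgebra for operations `p` (≺), `s` (≻), `c` (∘),
with ⋆ = p + s + c. -/
def IsTriDend {A : Type*} [AddCommGroup A] (p s c : A → A → A) : Prop :=
  ∀ x y z : A,
    p (p x y) z = p x (p y z + s y z + c y z) ∧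
    p (s x y) z = s x (p y z) ∧
    s (p x y + s x y + c x y) z = s x (s y z) ∧
    c (s x y) z = s x (c y z) ∧
    c (p x y) z = c x (s y z) ∧
    p (c x y) z = c x (p y z) ∧
    c (c x y) z = c x (c y z)

/-- A TD-operator γ on a unital associative algebra gives a dendriform
trialgebra via x ≺ y = xγ(y), x ≻ y = γ(x)y, x ∘ y = -xγ(1)y. -/
theorem TD_gives_tridend
    {k A : Type*} [Field k] [CharZero k] [Ring A] [Algebra k A]
    (γ : A →ₗ[k] A)
    (hγ : ∀ x y : A, γ x * γ y = γ (γ x * y + x * γ y - x * γ 1 * y)) :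
    IsTriDend (fun x y => x * γ y) (fun x y => γ x * y)
      (fun x y => -(x * γ 1 * y)) := by
  have key : ∀ y : A, γ y * γ 1 = γ 1 * γ y := by
    intro y
    have h1 := hγ y 1
    have h2 := hγ 1 y
    simp only [mul_one, one_mul, add_sub_cancel_right] at h1
    simp only [mul_one, one_mul] at h2
    rw [h1, h2]
    congr 1
    abel
  intro x y z
  refine ⟨?_, ?_, ?_, ?_, ?_, ?_, ?_⟩
  · simp only
    rw [mul_assoc, hγ y z]
    congr 1
    noncomm_ring
  · simp only; noncomm_ring
  · simp only
    rw [← mul_assoc, hγ x y]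
    congr 2
    noncomm_ring
  · simp only; noncomm_ring
  · simp only
    rw [mul_assoc x (γ y) (γ 1), key y]
    noncomm_ring
  · simp only; noncomm_ring
  · simp only; noncomm_ring
end

section
/- Let γ be a TD-operator on a unital associative algebra A with unit i. Then the operation x ⋆̄ y := xγ(y) + γ(x)y - xγ(i)y is associative. -/
/-- For a TD-operator γ on a unital associative algebra, the operation
x ⋆̄ y = xγ(y) + γ(x)y - xγ(1)y is associative. -/
theorem TD_barstar_assoc
    {k A : Type*} [Field k] [CharZero k] [Ring A] [Algebra k A]
    (γ : A →ₗ[k] A)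
    (hγ : ∀ x y : A, γ x * γ y = γ (γ x * y + x * γ y - x * γ 1 * y)) :
    ∀ x y z : A,
      (x * γ y + γ x * y - x * γ 1 * y) * γ z
        + γ (x * γ y + γ x * y - x * γ 1 * y) * z
        - (x * γ y + γ x * y - x * γ 1 * y) * γ 1 * z
      = x * γ (y * γ z + γ y * z - y * γ 1 * z)
        + γ x * (y * γ z + γ y * z - y * γ 1 * z)
        - x * γ 1 * (y * γ z + γ y * z - y * γ 1 * z) := by
  have hc : ∀ a b : A, γ (a * γ b + γ a * b - a * γ 1 * b) = γ a * γ b := by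
    intro a b
    rw [show a * γ b + γ a * b - a * γ 1 * b
        = γ a * b + a * γ b - a * γ 1 * b from by noncomm_ring, ← hγ]
  intro x y z
  have key : γ y * γ 1 = γ 1 * γ y := by
    have h1 := hγ y 1
    have h2 := hγ 1 y
    simp only [mul_one, one_mul] at h1 h2
    rw [h1, h2]
    congr 1
    noncomm_ring
  rw [hc x y, hc y z]
  linear_combination (norm := noncomm_ring) (-x) * key * z
end

section
/- Let (A, μ, Δ) be a dendriform-Nijenhuis bialgebra. Then the right shift β: End(A) → End(A), β(T) := id * T (where * is the convolution product T * S := μ∘(T⊗S)∘Δ), is an associative Nijenhuis operator on (End(A), composition): β(T)β(S) + β²(TS) = β(β(T)S + Tβ(S)). -/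
open TensorProduct

variable {k A : Type*} [Field k] [CharZero k] [NonUnitalRing A] [Module k A]
  [SMulCommClass k A A] [IsScalarTower k A A]

/-- Δ is coassociative. -/
def Coassoc (Δ : A →ₗ[k] A ⊗[k] A) : Prop :=
  (TensorProduct.assoc k A A A).toLinearMap ∘ₗ (Δ.rTensor A) ∘ₗ Δ
    = (Δ.lTensor A) ∘ₗ Δ

/-- The dendriform-Nijenhuis compatibility:
Δ(ab) = Δ(a)b + aΔ(b) - μ(Δ(a)) ⊗ b. -/
def DendNijRule (Δ : A →ₗ[k] A ⊗[k] A) : Prop :=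
  ∀ a b : A,
    Δ (a * b) = (LinearMap.mulRight k b).lTensor A (Δ a)
      + (LinearMap.mulLeft k a).rTensor A (Δ b)
      - (LinearMap.mul' k A (Δ a)) ⊗ₜ[k] b

/-- Convolution product on End(A): T * S = μ ∘ (T ⊗ S) ∘ Δ. -/
noncomputable def conv (Δ : A →ₗ[k] A ⊗[k] A) (T S : A →ₗ[k] A) : A →ₗ[k] A :=
  (LinearMap.mul' k A) ∘ₗ (TensorProduct.map T S) ∘ₗ Δ

/-- `a ⊗ b ⊗ c ↦ a * T (b * S c)` -/
noncomputable def Fmap (T S : A →ₗ[k] A) : A ⊗[k] (A ⊗[k] A) →ₗ[k] A :=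
  (LinearMap.mul' k A) ∘ₗ TensorProduct.map LinearMap.id
    (T ∘ₗ (LinearMap.mul' k A) ∘ₗ TensorProduct.map LinearMap.id S)

/-- `a ⊗ b ⊗ c ↦ a * (b * T (S c))` -/
noncomputable def Gmap (T S : A →ₗ[k] A) : A ⊗[k] (A ⊗[k] A) →ₗ[k] A :=
  (LinearMap.mul' k A) ∘ₗ TensorProduct.map LinearMap.id
    ((LinearMap.mul' k A) ∘ₗ TensorProduct.map LinearMap.id (T ∘ₗ S))

lemma mini1 (T S : A →ₗ[k] A) (b : A) (y : A ⊗[k] A) :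
    LinearMap.mul' k A (TensorProduct.map LinearMap.id T
        ((LinearMap.mulRight k (S b)).lTensor A y))
      = Fmap T S ((TensorProduct.assoc k A A A) (y ⊗ₜ[k] b)) := by
  induction y using TensorProduct.induction_on with
  | zero => simp
  | tmul p q => simp [Fmap, mul_assoc]
  | add x y hx hy =>
      simp only [map_add, add_tmul] at *
      rw [hx, hy]

lemma mini2 (T : A →ₗ[k] A) (a : A) (z : A ⊗[k] A) :
    LinearMap.mul' k A (TensorProduct.map LinearMap.id T
        ((LinearMap.mulLeft k a).rTensor A z))
      = a * LinearMap.mul' k A (TensorProduct.map LinearMap.id T z) := by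
  induction z using TensorProduct.induction_on with
  | zero => simp
  | tmul p q => simp [mul_assoc]
  | add x y hx hy =>
      simp only [map_add, mul_add] at *
      rw [hx, hy]

lemma mini3 (T S : A →ₗ[k] A) (b : A) (y : A ⊗[k] A) :
    LinearMap.mul' k A y * T (S b)
      = Gmap T S ((TensorProduct.assoc k A A A) (y ⊗ₜ[k] b)) := by
  induction y using TensorProduct.induction_on with
  | zero => simp
  | tmul p q => simp [Gmap, mul_assoc]
  | add x y hx hy =>
      simp only [map_add, add_tmul, add_mul] at *
      rw [hx, hy]

lemma key (Δ : A →ₗ[k] A ⊗[k] A) (hrule : DendNijRule Δ) (T S : A →ₗ[k] A)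
    (a b : A) :
    conv Δ LinearMap.id T (LinearMap.mul' k A (TensorProduct.map LinearMap.id S (a ⊗ₜ[k] b)))
      = LinearMap.mul' k A (TensorProduct.map LinearMap.id
          ((conv Δ LinearMap.id T) ∘ₗ S) (a ⊗ₜ[k] b))
        + Fmap T S ((TensorProduct.assoc k A A A) ((Δ.rTensor A) (a ⊗ₜ[k] b)))
        - Gmap T S ((TensorProduct.assoc k A A A) ((Δ.rTensor A) (a ⊗ₜ[k] b))) := by
  simp only [TensorProduct.map_tmul, LinearMap.id_coe, id_eq, LinearMap.mul'_apply,
    LinearMap.rTensor_tmul]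
  rw [show conv Δ LinearMap.id T (a * S b)
      = LinearMap.mul' k A (TensorProduct.map LinearMap.id T (Δ (a * S b))) from rfl,
    hrule a (S b)]
  simp only [map_add, map_sub, TensorProduct.map_tmul, LinearMap.id_coe, id_eq,
    LinearMap.mul'_apply]
  rw [mini1 T S b (Δ a), mini2 T a (Δ (S b)), mini3 T S b (Δ a)]
  have : a * LinearMap.mul' k A (TensorProduct.map LinearMap.id T (Δ (S b)))
      = a * (conv Δ LinearMap.id T ∘ₗ S) b := rfl
  rw [this]
  abel

lemma lemA (Δ : A →ₗ[k] A ⊗[k] A) (T S : A →ₗ[k] A) (a : A) :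
    Fmap T S ((Δ.lTensor A) (Δ a))
      = conv Δ LinearMap.id (T ∘ₗ conv Δ LinearMap.id S) a := by
  have h : Fmap T S ∘ₗ (Δ.lTensor A)
      = (LinearMap.mul' k A) ∘ₗ TensorProduct.map LinearMap.id
          (T ∘ₗ conv Δ LinearMap.id S) := by
    apply TensorProduct.ext'
    intro x y
    simp [Fmap, conv]
  have := LinearMap.congr_fun h (Δ a)
  simpa [conv] using this

lemma lemB (Δ : A →ₗ[k] A ⊗[k] A) (T S : A →ₗ[k] A) (a : A) :
    Gmap T S ((Δ.lTensor A) (Δ a))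
      = conv Δ LinearMap.id (conv Δ LinearMap.id (T ∘ₗ S)) a := by
  have h : Gmap T S ∘ₗ (Δ.lTensor A)
      = (LinearMap.mul' k A) ∘ₗ TensorProduct.map LinearMap.id
          (conv Δ LinearMap.id (T ∘ₗ S)) := by
    apply TensorProduct.ext'
    intro x y
    simp [Gmap, conv]
  have := LinearMap.congr_fun h (Δ a)
  simpa [conv] using this

lemma key' (Δ : A →ₗ[k] A ⊗[k] A) (hrule : DendNijRule Δ) (T S : A →ₗ[k] A)
    (x : A ⊗[k] A) :
    conv Δ LinearMap.id T (LinearMap.mul' k A (TensorProduct.map LinearMap.id S x))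
      = LinearMap.mul' k A (TensorProduct.map LinearMap.id
          ((conv Δ LinearMap.id T) ∘ₗ S) x)
        + Fmap T S ((TensorProduct.assoc k A A A) ((Δ.rTensor A) x))
        - Gmap T S ((TensorProduct.assoc k A A A) ((Δ.rTensor A) x)) := by
  induction x using TensorProduct.induction_on with
  | zero => simp
  | tmul a b => exact key Δ hrule T S a b
  | add x y hx hy =>
      simp only [map_add] at *
      rw [hx, hy]
      abel

/-- For a dendriform-Nijenhuis bialgebra, the right shift
β(T) = id * T is an associative Nijenhuis operator on End(A) with composition. -/
theorem rightShift_nijenhuis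
    (Δ : A →ₗ[k] A ⊗[k] A) (hco : Coassoc Δ) (hrule : DendNijRule Δ) :
    ∀ T S : A →ₗ[k] A,
      (conv Δ LinearMap.id T) ∘ₗ (conv Δ LinearMap.id S)
        + conv Δ LinearMap.id (conv Δ LinearMap.id (T ∘ₗ S))
      = conv Δ LinearMap.id ((conv Δ LinearMap.id T) ∘ₗ S + T ∘ₗ (conv Δ LinearMap.id S)) := by
  intro T S
  ext a
  have hco' : (TensorProduct.assoc k A A A) ((Δ.rTensor A) (Δ a))
      = (Δ.lTensor A) (Δ a) := by
    have := LinearMap.congr_fun hco a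
    simpa using this
  have h1 : conv Δ LinearMap.id T (conv Δ LinearMap.id S a)
      = conv Δ LinearMap.id ((conv Δ LinearMap.id T) ∘ₗ S) a
        + conv Δ LinearMap.id (T ∘ₗ conv Δ LinearMap.id S) a
        - conv Δ LinearMap.id (conv Δ LinearMap.id (T ∘ₗ S)) a := by
    have := key' Δ hrule T S (Δ a)
    rw [hco', lemA Δ T S a, lemB Δ T S a] at this
    exact this
  have h2 : conv Δ LinearMap.id ((conv Δ LinearMap.id T) ∘ₗ S + T ∘ₗ (conv Δ LinearMap.id S)) a
      = conv Δ LinearMap.id ((conv Δ LinearMap.id T) ∘ₗ S) a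
        + conv Δ LinearMap.id (T ∘ₗ conv Δ LinearMap.id S) a := by
    simp [conv, TensorProduct.map_add_right]
  simp only [LinearMap.add_apply, LinearMap.comp_apply]
  rw [h1, h2]
  abel
end

section
/- Let (A, μ, Δ) be a dendriform-Nijenhuis bialgebra. Then the left shift γ: End(A) → End(A), γ(T) := T * id, is a TD-operator on (End(A), composition) with respect to the identity map id: γ(T)γ(S) = γ(γ(T)S + Tγ(S) - Tγ(id)S). -/
open TensorProduct

variable {k A : Type*} [Field k] [CharZero k] [NonUnitalRing A] [Module k A]
  [SMulCommClass k A A] [IsScalarTower k A A]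

lemma aux1 (T : A →ₗ[k] A) (y : A) (w : A ⊗[k] A) :
    LinearMap.mul' k A (TensorProduct.map T LinearMap.id
      ((LinearMap.mulRight k y).lTensor A w))
    = LinearMap.mul' k A (TensorProduct.map T LinearMap.id w) * y := by
  induction w using TensorProduct.induction_on with
  | zero => simp
  | tmul p q => simp [mul_assoc]
  | add u v hu hv => simp only [map_add, hu, hv, add_mul]

lemma aux2 (T S : A →ₗ[k] A) (x : A) (w : A ⊗[k] A) :
    LinearMap.mul' k A (TensorProduct.map T LinearMap.id
      ((LinearMap.mulLeft k (S x)).rTensor A w))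
    = LinearMap.mul' k A (TensorProduct.map
        (T ∘ₗ LinearMap.mul' k A ∘ₗ TensorProduct.map S LinearMap.id) LinearMap.id
        ((TensorProduct.assoc k A A A).symm.toLinearMap (x ⊗ₜ[k] w))) := by
  induction w using TensorProduct.induction_on with
  | zero => simp
  | tmul p q => simp
  | add u v hu hv => simp only [tmul_add, map_add, hu, hv]

lemma step1 (Δ : A →ₗ[k] A ⊗[k] A) (hrule : DendNijRule Δ) (T S : A →ₗ[k] A) :
    conv Δ T LinearMap.id ∘ₗ LinearMap.mul' k A ∘ₗ TensorProduct.map S LinearMap.id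
    = (LinearMap.mul' k A ∘ₗ TensorProduct.map (conv Δ T LinearMap.id ∘ₗ S) LinearMap.id)
      + ((LinearMap.mul' k A ∘ₗ TensorProduct.map
            (T ∘ₗ LinearMap.mul' k A ∘ₗ TensorProduct.map S LinearMap.id) LinearMap.id)
          ∘ₗ (TensorProduct.assoc k A A A).symm.toLinearMap ∘ₗ Δ.lTensor A)
      - (LinearMap.mul' k A ∘ₗ TensorProduct.map
          (T ∘ₗ conv Δ LinearMap.id LinearMap.id ∘ₗ S) LinearMap.id) := by
  apply TensorProduct.ext'
  intro x y
  simp only [LinearMap.comp_apply, LinearMap.add_apply, LinearMap.sub_apply,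
    TensorProduct.map_tmul, LinearMap.id_apply, LinearMap.mul'_apply,
    LinearMap.lTensor_tmul]
  rw [conv, conv]
  simp only [LinearMap.comp_apply, TensorProduct.map_id, LinearMap.id_apply]
  rw [hrule (S x) y]
  simp only [map_add, map_sub]
  rw [aux1, aux2 T S x (Δ y)]
  simp [LinearMap.mul'_apply]

lemma aux3 (f : A ⊗[k] A →ₗ[k] A) (Δ : A →ₗ[k] A ⊗[k] A) :
    TensorProduct.map f LinearMap.id ∘ₗ Δ.rTensor A
      = TensorProduct.map (f ∘ₗ Δ) (LinearMap.id : A →ₗ[k] A) := by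
  apply TensorProduct.ext'
  intro x y
  simp


/-- For a dendriform-Nijenhuis bialgebra, the left shift
γ(T) = T * id is a TD-operator on End(A) with composition, with unit id. -/
theorem leftShift_TD
    (Δ : A →ₗ[k] A ⊗[k] A) (hco : Coassoc Δ) (hrule : DendNijRule Δ) :
    ∀ T S : A →ₗ[k] A,
      (conv Δ T LinearMap.id) ∘ₗ (conv Δ S LinearMap.id)
      = conv Δ ((conv Δ T LinearMap.id) ∘ₗ S + T ∘ₗ (conv Δ S LinearMap.id)
          - T ∘ₗ (conv Δ LinearMap.id LinearMap.id) ∘ₗ S) LinearMap.id := by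
  intro T S
  have hco' : (TensorProduct.assoc k A A A).symm.toLinearMap ∘ₗ Δ.lTensor A ∘ₗ Δ
      = Δ.rTensor A ∘ₗ Δ := by
    rw [← hco]
    ext a
    simp
  have hmap : TensorProduct.map
      ((conv Δ T LinearMap.id) ∘ₗ S + T ∘ₗ (conv Δ S LinearMap.id)
        - T ∘ₗ (conv Δ LinearMap.id LinearMap.id) ∘ₗ S) (LinearMap.id : A →ₗ[k] A)
      = TensorProduct.map ((conv Δ T LinearMap.id) ∘ₗ S) LinearMap.id
        + TensorProduct.map (T ∘ₗ (conv Δ S LinearMap.id)) LinearMap.id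
        - TensorProduct.map (T ∘ₗ (conv Δ LinearMap.id LinearMap.id) ∘ₗ S) LinearMap.id := by
    apply TensorProduct.ext'
    intro x y
    simp [add_tmul, sub_tmul]
  have lhs : (conv Δ T LinearMap.id) ∘ₗ (conv Δ S LinearMap.id)
      = (conv Δ T LinearMap.id ∘ₗ LinearMap.mul' k A ∘ₗ TensorProduct.map S LinearMap.id) ∘ₗ Δ := rfl
  have mid : ((LinearMap.mul' k A ∘ₗ TensorProduct.map
        (T ∘ₗ LinearMap.mul' k A ∘ₗ TensorProduct.map S LinearMap.id) LinearMap.id)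
        ∘ₗ (TensorProduct.assoc k A A A).symm.toLinearMap ∘ₗ Δ.lTensor A) ∘ₗ Δ
      = LinearMap.mul' k A ∘ₗ TensorProduct.map (T ∘ₗ conv Δ S LinearMap.id) LinearMap.id ∘ₗ Δ := by
    ext a
    have h := LinearMap.congr_fun hco' a
    simp only [LinearMap.comp_apply] at h ⊢
    rw [h, ← LinearMap.comp_apply (TensorProduct.map _ _) (Δ.rTensor A), aux3]
    rfl
  rw [lhs, step1 Δ hrule T S, LinearMap.sub_comp, LinearMap.add_comp, mid]
  rw [show conv Δ ((conv Δ T LinearMap.id) ∘ₗ S + T ∘ₗ (conv Δ S LinearMap.id)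
      - T ∘ₗ (conv Δ LinearMap.id LinearMap.id) ∘ₗ S) LinearMap.id
    = LinearMap.mul' k A ∘ₗ (TensorProduct.map
      ((conv Δ T LinearMap.id) ∘ₗ S + T ∘ₗ (conv Δ S LinearMap.id)
        - T ∘ₗ (conv Δ LinearMap.id LinearMap.id) ∘ₗ S) LinearMap.id) ∘ₗ Δ from rfl, hmap,
    LinearMap.sub_comp, LinearMap.add_comp, LinearMap.comp_sub, LinearMap.comp_add]
  rfl
end

section
/- Let (A, μ, Δ) be a dendriform-Nijenhuis bialgebra. Define x ⋈ y := μ(Δ(x))y and x ≺_A y := xμ(Δ(y)). Then (A, ⋈, ≺_A) is an L-anti-dipterous algebra: ⋈ is associative, (x ≺_A y) ≺_A z = x ≺_A (y ⋈ z), and (x ⋈ y) ≺_A z = x ⋈ (y ≺_A z). -/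
open TensorProduct

variable {k A : Type*} [Field k] [CharZero k] [NonUnitalRing A] [Module k A]
  [SMulCommClass k A A] [IsScalarTower k A A]

/-- In a dendriform-Nijenhuis bialgebra, x ⋈ y := μ(Δ(x))y and
x ≺_A y := xμ(Δ(y)) form an L-anti-dipterous algebra. -/
theorem L_anti_dipterous
    (Δ : A →ₗ[k] A ⊗[k] A) (hco : Coassoc Δ) (hrule : DendNijRule Δ) :
    (∀ x y z : A,
      (LinearMap.mul' k A (Δ (LinearMap.mul' k A (Δ x) * y))) * z
        = LinearMap.mul' k A (Δ x) * (LinearMap.mul' k A (Δ y) * z)) ∧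
    (∀ x y z : A,
      (x * LinearMap.mul' k A (Δ y)) * LinearMap.mul' k A (Δ z)
        = x * LinearMap.mul' k A (Δ (LinearMap.mul' k A (Δ y) * z))) ∧
    (∀ x y z : A,
      (LinearMap.mul' k A (Δ x) * y) * LinearMap.mul' k A (Δ z)
        = LinearMap.mul' k A (Δ x) * (y * LinearMap.mul' k A (Δ z))) := by
  have key : ∀ a b : A, LinearMap.mul' k A (Δ (a * b)) = a * LinearMap.mul' k A (Δ b) := by
    intro a b
    rw [hrule a b]
    have h1 : ∀ t : A ⊗[k] A,
        LinearMap.mul' k A ((LinearMap.mulRight k b).lTensor A t)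
          = LinearMap.mul' k A t * b := by
      intro t
      induction t using TensorProduct.induction_on with
      | zero => simp
      | tmul x y => simp [mul_assoc]
      | add x y hx hy => simp [hx, hy, add_mul]
    have h2 : ∀ t : A ⊗[k] A,
        LinearMap.mul' k A ((LinearMap.mulLeft k a).rTensor A t)
          = a * LinearMap.mul' k A t := by
      intro t
      induction t using TensorProduct.induction_on with
      | zero => simp
      | tmul x y => simp [mul_assoc]
      | add x y hx hy => simp [hx, hy, mul_add]
    simp only [map_sub, map_add, h1, h2, LinearMap.mul'_apply]
    abel
  refine ⟨?_, ?_, ?_⟩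
  · intro x y z
    rw [key, mul_assoc]
  · intro x y z
    rw [key, mul_assoc]
  · intro x y z
    rw [mul_assoc]
end

section
/- Let (A, μ, Δ) be a dendriform-Nijenhuis bialgebra. If ∂: A → A is a derivation (∂(xy) = ∂(x)y + x∂(y)), then β(∂) := μ∘(id ⊗ ∂)∘Δ is also a derivation. -/
open TensorProduct

variable {k A : Type*} [Field k] [CharZero k] [NonUnitalRing A] [Module k A]
  [SMulCommClass k A A] [IsScalarTower k A A]

/-- In a dendriform-Nijenhuis bialgebra, if D is a derivation then
so is β(D) := μ ∘ (id ⊗ D) ∘ Δ. -/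
theorem rightShift_derivation
    (Δ : A →ₗ[k] A ⊗[k] A) (hco : Coassoc Δ) (hrule : DendNijRule Δ)
    (D : A →ₗ[k] A) (hder : ∀ x y : A, D (x * y) = D x * y + x * D y) :
    ∀ x y : A,
      ((LinearMap.mul' k A) ∘ₗ (D.lTensor A) ∘ₗ Δ) (x * y)
        = ((LinearMap.mul' k A) ∘ₗ (D.lTensor A) ∘ₗ Δ) x * y
          + x * ((LinearMap.mul' k A) ∘ₗ (D.lTensor A) ∘ₗ Δ) y := by
  intro x y
  have aux1 : ∀ t : A ⊗[k] A,
      (LinearMap.mul' k A) (D.lTensor A ((LinearMap.mulRight k y).lTensor A t))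
        = (LinearMap.mul' k A) (D.lTensor A t) * y + (LinearMap.mul' k A) t * D y := by
    intro t
    induction t using TensorProduct.induction_on with
    | zero => simp
    | tmul a b =>
        simp [LinearMap.mul'_apply, hder b y, mul_add, mul_assoc]
    | add u v hu hv =>
        simp only [map_add, hu, hv, add_mul]; abel
  have aux2 : ∀ t : A ⊗[k] A,
      (LinearMap.mul' k A) (D.lTensor A ((LinearMap.mulLeft k x).rTensor A t))
        = x * (LinearMap.mul' k A) (D.lTensor A t) := by
    intro t
    induction t using TensorProduct.induction_on with
    | zero => simp
    | tmul a b => simp [LinearMap.mul'_apply, mul_assoc]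
    | add u v hu hv => simp only [map_add, hu, hv, mul_add]
  simp only [LinearMap.comp_apply, hrule x y, map_add, map_sub, aux1, aux2,
    LinearMap.lTensor_tmul, LinearMap.mul'_apply]
  abel
end

section
/- Let (TD, ≺, ≻, ∘) be a dendriform trialgebra and β a Nijenhuis operator on it. Define x ↑ y := x ∘ β(y), x •̃ y := -β(x ∘ y), and the sum operations ⊲ y etc. as in the dendriform-Nijenhuis construction. Then (x ↑ y) ↑ z = x ↑ (y •̄ z), where x •̄ y := x ∘ β(y) + β(x) ∘ y - β(x ∘ y). -/
/-- For a dendriform trialgebra with a Nijenhuis operator β, with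
x ↑ y := x ∘ β(y) and x •̄ y := x ∘ β(y) + β(x) ∘ y - β(x ∘ y), one has
(x ↑ y) ↑ z = x ↑ (y •̄ z). -/
theorem nijenhuis_tridend_up
    {k TD : Type*} [Field k] [CharZero k] [AddCommGroup TD] [Module k TD]
    (p s c : TD → TD → TD) (h : IsTriDend p s c)
    (β : TD →ₗ[k] TD)
    (hp : ∀ x y : TD, p (β x) (β y) = β (p (β x) y + p x (β y) - β (p x y)))
    (hs : ∀ x y : TD, s (β x) (β y) = β (s (β x) y + s x (β y) - β (s x y)))
    (hc : ∀ x y : TD, c (β x) (β y) = β (c (β x) y + c x (β y) - β (c x y))) :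
    ∀ x y z : TD,
      c (c x (β y)) (β z)
        = c x (β (c y (β z) + c (β y) z - β (c y z))) := by
  intro x y z
  rw [(h x (β y) (β z)).2.2.2.2.2.2, hc y z, add_comm (c (β y) z)]
end
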